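/- Second-order expansion with propensity-score matching for discrete covariates: define q̃₀(w) := ∑_{w' : g₀(w') = g₀(w)} q₀(w') and q̃_W(w) := ∑_{w' : g₀(w') = g₀(w)} q_W(w'). Define Ψ(Q) := ∑_w q_W(w)·Q̄(w), ψ₀ := ∑_w q₀(w)·Q̄₀(w), D⁽¹⁾(P)(w,a,y) := (a/g(w))·(y − Q̄(w)) + Q̄(w) − Ψ(Q), the propensity-matched second-order gradient D⁽²⁾(P)((w₁,a₁,y₁),(w₂,a₂,y₂)) := 2·a₁·𝟙{g₀(w₁) = g₀(w₂)}/(g(w₁)·q̃_W(w₁))·(1 − a₂/g(w₁))·(y₁ − Q̄(w₁)), and the remainder R₃(P,P₀) := ∑_w q₀(w)·(1 − g₀(w)q̃₀(w)/(g(w)q̃_W(w)))·(1 − g₀(w)/g(w))·(Q̄(w) − Q̄₀(w)). Then Ψ(Q) − ψ₀ = −E_{P₀}[D⁽¹⁾(P)(O)] − (1/2)·E_{P₀×P₀}[D⁽²⁾(P)(O₁,O₂)] + R₃(P,P₀). -/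

import Mathlib

/-!
Every term of the expansion is an explicit finite sum, so the theorem is an algebraic identity
once the two expectations are computed. Under `P₀` the residual `y - Q̄(w)` has conditional mean
`Q̄₀(w) - Q̄(w)` given `a = 1`, which gives `E[D⁽¹⁾]`. In `E[D⁽²⁾]` the inner expectation over
`O₂` only sees the stratum `{g₀ = g₀(w₁)}`, on which `a₂` has mean `g₀(w₁)`, so it contributes
`q̃₀(w₁)·(1 - g₀(w₁)/g(w₁))`. After writing `Ψ(Q) = ∑_w q₀(w)·Ψ(Q)`, what remains is, covariate by
covariate, a ring identity in which `g(w)⁻¹` and `q̃_W(w)⁻¹` are mere symbols.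
-/

open Finset

noncomputable section

variable {W : Type*} [Fintype W]

/-- The law `P₀` of an observation `(w, a, y)`. -/
def obsPmf (q₀ g₀ Qbar0 : W → ℝ) (o : W × Fin 2 × Fin 2) : ℝ :=
  q₀ o.1 * (((o.2.1 : ℕ) : ℝ) * g₀ o.1 * Qbar0 o.1 ^ ((o.2.2 : ℕ))
    * (1 - Qbar0 o.1) ^ (1 - (o.2.2 : ℕ))
    + (1 - ((o.2.1 : ℕ) : ℝ)) * (1 - g₀ o.1) * (if (o.2.2 : ℕ) = 0 then (1 : ℝ) else 0))

/-- `q̃₀` and `q̃_W` are `stratumMass g₀ q₀` and `stratumMass g₀ qW`. -/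
def stratumMass (g₀ q : W → ℝ) (w : W) : ℝ :=
  ∑ w', if g₀ w' = g₀ w then q w' else 0

def firstOrderGradient (qW g Qbar : W → ℝ) (o : W × Fin 2 × Fin 2) : ℝ :=
  ((o.2.1 : ℕ) : ℝ) / g o.1 * (((o.2.2 : ℕ) : ℝ) - Qbar o.1) + Qbar o.1 - ∑ w, qW w * Qbar w

def secondOrderGradient (g₀ g Qbar qtW : W → ℝ) (o₁ o₂ : W × Fin 2 × Fin 2) : ℝ :=
  2 * ((o₁.2.1 : ℕ) : ℝ) * (if g₀ o₁.1 = g₀ o₂.1 then (1 : ℝ) else 0)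
    / (g o₁.1 * qtW o₁.1) * (1 - ((o₂.2.1 : ℕ) : ℝ) / g o₁.1) * (((o₁.2.2 : ℕ) : ℝ) - Qbar o₁.1)

theorem sum_ite_eq_mul_stratum {ι β R : Type*} [Fintype ι] [DecidableEq β] [Semiring R]
    (k : ι → β) (c : β) (q : ι → R) (F : β → R) :
    ∑ i, (if k i = c then q i * F (k i) else 0) = (∑ i, if k i = c then q i else 0) * F c := by
  rw [sum_mul]
  refine sum_congr rfl fun i _ => ?_
  split_ifs with h
  · rw [h]
  · rw [zero_mul]

theorem sum_obsPmf_mul (q₀ g₀ Qbar0 : W → ℝ) (f : W × Fin 2 × Fin 2 → ℝ) :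
    ∑ o, obsPmf q₀ g₀ Qbar0 o * f o =
      ∑ w, q₀ w * (g₀ w * (Qbar0 w * f (w, 1, 1) + (1 - Qbar0 w) * f (w, 1, 0))
        + (1 - g₀ w) * f (w, 0, 0)) := by
  rw [Fintype.sum_prod_type]
  refine sum_congr rfl fun w _ => ?_
  simp only [obsPmf, Fintype.sum_prod_type, Fin.sum_univ_two, Fin.val_zero, Fin.val_one,
    Nat.cast_zero, Nat.cast_one, pow_zero, pow_one, tsub_zero, tsub_self, one_ne_zero, if_true,
    if_false]
  ring

theorem sum_obsPmf_mul_firstOrderGradient (q₀ g₀ Qbar0 qW g Qbar : W → ℝ) :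
    ∑ o, obsPmf q₀ g₀ Qbar0 o * firstOrderGradient qW g Qbar o =
      ∑ w, q₀ w * (g₀ w / g w * (Qbar0 w - Qbar w) + Qbar w - ∑ w', qW w' * Qbar w') := by
  rw [sum_obsPmf_mul]
  refine sum_congr rfl fun w _ => ?_
  simp only [firstOrderGradient, Fin.val_zero, Fin.val_one, Nat.cast_zero, Nat.cast_one]
  ring

theorem sum_obsPmf_mul_secondOrderGradient_right (q₀ g₀ Qbar0 g Qbar qtW : W → ℝ)
    (o₁ : W × Fin 2 × Fin 2) :
    ∑ o₂, obsPmf q₀ g₀ Qbar0 o₂ * secondOrderGradient g₀ g Qbar qtW o₁ o₂ =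
      2 * ((o₁.2.1 : ℕ) : ℝ) * (((o₁.2.2 : ℕ) : ℝ) - Qbar o₁.1) / (g o₁.1 * qtW o₁.1)
        * (stratumMass g₀ q₀ o₁.1 * (1 - g₀ o₁.1 / g o₁.1)) := by
  rw [stratumMass, ← sum_ite_eq_mul_stratum g₀ _ q₀ fun t => 1 - t / g o₁.1, mul_sum,
    sum_obsPmf_mul]
  refine sum_congr rfl fun w₂ _ => ?_
  by_cases h : g₀ w₂ = g₀ o₁.1
  · simp only [secondOrderGradient, h, if_true, Fin.val_zero, Fin.val_one, Nat.cast_zero,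
      Nat.cast_one]
    ring
  · simp only [secondOrderGradient, h, Ne.symm h, if_false, mul_zero, zero_div, zero_mul,
      add_zero]

theorem sum_sum_obsPmf_mul_secondOrderGradient (q₀ g₀ Qbar0 g Qbar qtW : W → ℝ) :
    ∑ o₁, ∑ o₂, obsPmf q₀ g₀ Qbar0 o₁ * obsPmf q₀ g₀ Qbar0 o₂
        * secondOrderGradient g₀ g Qbar qtW o₁ o₂ =
      ∑ w, 2 * q₀ w * g₀ w * (Qbar0 w - Qbar w) / (g w * qtW w)
        * (stratumMass g₀ q₀ w * (1 - g₀ w / g w)) := by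
  simp_rw [mul_assoc (obsPmf q₀ g₀ Qbar0 _), ← mul_sum,
    sum_obsPmf_mul_secondOrderGradient_right, sum_obsPmf_mul]
  refine sum_congr rfl fun w _ => ?_
  simp only [Fin.val_zero, Fin.val_one, Nat.cast_zero, Nat.cast_one]
  ring

end

theorem second_order_expansion_propensity_matched_general
    {W : Type*} [Fintype W]
    (q₀ qW g₀ g Qbar0 Qbar : W → ℝ)
    (hq₀sum : ∑ w, q₀ w = 1)
    (qt₀ qtW : W → ℝ)
    (hqt₀ : ∀ w, qt₀ w = ∑ w', if g₀ w' = g₀ w then q₀ w' else 0)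
    (p : W × Fin 2 × Fin 2 → ℝ)
    (hp : ∀ o : W × Fin 2 × Fin 2,
      p o = q₀ o.1 * (((o.2.1 : ℕ) : ℝ) * g₀ o.1 * Qbar0 o.1 ^ ((o.2.2 : ℕ))
              * (1 - Qbar0 o.1) ^ (1 - (o.2.2 : ℕ))
            + (1 - ((o.2.1 : ℕ) : ℝ)) * (1 - g₀ o.1)
              * (if (o.2.2 : ℕ) = 0 then (1 : ℝ) else 0)))
    (D1 : W × Fin 2 × Fin 2 → ℝ)
    (hD1 : ∀ o : W × Fin 2 × Fin 2,
      D1 o = ((o.2.1 : ℕ) : ℝ) / g o.1 * (((o.2.2 : ℕ) : ℝ) - Qbar o.1)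
          + Qbar o.1 - ∑ w, qW w * Qbar w)
    (D2 : (W × Fin 2 × Fin 2) → (W × Fin 2 × Fin 2) → ℝ)
    (hD2 : ∀ o₁ o₂ : W × Fin 2 × Fin 2,
      D2 o₁ o₂ = 2 * ((o₁.2.1 : ℕ) : ℝ)
          * (if g₀ o₁.1 = g₀ o₂.1 then (1 : ℝ) else 0)
          / (g o₁.1 * qtW o₁.1) * (1 - ((o₂.2.1 : ℕ) : ℝ) / g o₁.1)
          * (((o₁.2.2 : ℕ) : ℝ) - Qbar o₁.1)) :
    (∑ w, qW w * Qbar w) - (∑ w, q₀ w * Qbar0 w) =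
      -(∑ o : W × Fin 2 × Fin 2, p o * D1 o)
      - (1 / 2) * (∑ o₁ : W × Fin 2 × Fin 2, ∑ o₂ : W × Fin 2 × Fin 2,
          p o₁ * p o₂ * D2 o₁ o₂)
      + ∑ w, q₀ w * (1 - g₀ w * qt₀ w / (g w * qtW w)) * (1 - g₀ w / g w)
          * (Qbar w - Qbar0 w) := by
  obtain rfl : p = obsPmf q₀ g₀ Qbar0 := funext hp
  obtain rfl : D1 = firstOrderGradient qW g Qbar := funext hD1
  obtain rfl : D2 = secondOrderGradient g₀ g Qbar qtW := funext fun o₁ => funext (hD2 o₁)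
  obtain rfl : qt₀ = stratumMass g₀ q₀ := funext hqt₀
  rw [sum_obsPmf_mul_firstOrderGradient, sum_sum_obsPmf_mul_secondOrderGradient]
  have hΨ : ∑ w, qW w * Qbar w = ∑ w, q₀ w * ∑ w', qW w' * Qbar w' := by
    rw [← sum_mul, hq₀sum, one_mul]
  conv_lhs => rw [hΨ]
  rw [← sum_sub_distrib, mul_sum, ← sum_neg_distrib, ← sum_sub_distrib, ← sum_add_distrib]
  exact sum_congr rfl fun w _ => by ring

/-- **Second-order expansion with propensity-score matching for discrete covariates.**
`W` finite, observed data `O = (w,a,y) ∈ W × {0,1} × {0,1}` with law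
`P₀(w,a,y) = q₀(w)·[a·g₀(w)·Qbar0(w)^y·(1−Qbar0(w))^{1−y} + (1−a)·(1−g₀(w))·𝟙{y=0}]`.
With `q̃₀(w) := ∑_{w' : g₀(w')=g₀(w)} q₀(w')`, `q̃W(w) := ∑_{w' : g₀(w')=g₀(w)} qW(w')`,
`Ψ := ∑_w qW(w)·Qbar(w)`, `ψ₀ := ∑_w q₀(w)·Qbar0(w)`,
`D⁽¹⁾(w,a,y) := (a/g(w))·(y − Qbar(w)) + Qbar(w) − Ψ`, the propensity-matched
second-order gradient
`D⁽²⁾((w₁,a₁,y₁),(w₂,a₂,y₂)) := 2·a₁·𝟙{g₀(w₁)=g₀(w₂)}/(g(w₁)·q̃W(w₁))·(1 − a₂/g(w₁))·(y₁ − Qbar(w₁))`,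
and `R₃ := ∑_w q₀(w)·(1 − g₀(w)q̃₀(w)/(g(w)q̃W(w)))·(1 − g₀(w)/g(w))·(Qbar(w) − Qbar0(w))`,
we have `Ψ − ψ₀ = −E_{P₀}[D⁽¹⁾] − (1/2)·E_{P₀×P₀}[D⁽²⁾] + R₃`. -/
theorem second_order_expansion_propensity_matched
    {W : Type*} [Fintype W] [DecidableEq W]
    (q₀ qW g₀ g Qbar0 Qbar : W → ℝ)
    (hq₀pos : ∀ w, 0 < q₀ w) (hq₀sum : ∑ w, q₀ w = 1)
    (hqWpos : ∀ w, 0 < qW w) (hqWsum : ∑ w, qW w = 1)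
    (hg₀0 : ∀ w, 0 ≤ g₀ w) (hg₀1 : ∀ w, g₀ w ≤ 1)
    (hQbar00 : ∀ w, 0 ≤ Qbar0 w) (hQbar01 : ∀ w, Qbar0 w ≤ 1)
    (hgpos : ∀ w, 0 < g w) (hg1 : ∀ w, g w ≤ 1)
    (qt₀ qtW : W → ℝ)
    (hqt₀ : ∀ w, qt₀ w = ∑ w', if g₀ w' = g₀ w then q₀ w' else 0)
    (hqtW : ∀ w, qtW w = ∑ w', if g₀ w' = g₀ w then qW w' else 0)
    (p : W × Fin 2 × Fin 2 → ℝ)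
    (hp : ∀ o : W × Fin 2 × Fin 2,
      p o = q₀ o.1 * (((o.2.1 : ℕ) : ℝ) * g₀ o.1 * Qbar0 o.1 ^ ((o.2.2 : ℕ))
              * (1 - Qbar0 o.1) ^ (1 - (o.2.2 : ℕ))
            + (1 - ((o.2.1 : ℕ) : ℝ)) * (1 - g₀ o.1)
              * (if (o.2.2 : ℕ) = 0 then (1 : ℝ) else 0)))
    (D1 : W × Fin 2 × Fin 2 → ℝ)
    (hD1 : ∀ o : W × Fin 2 × Fin 2,
      D1 o = ((o.2.1 : ℕ) : ℝ) / g o.1 * (((o.2.2 : ℕ) : ℝ) - Qbar o.1)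
          + Qbar o.1 - ∑ w, qW w * Qbar w)
    (D2 : (W × Fin 2 × Fin 2) → (W × Fin 2 × Fin 2) → ℝ)
    (hD2 : ∀ o₁ o₂ : W × Fin 2 × Fin 2,
      D2 o₁ o₂ = 2 * ((o₁.2.1 : ℕ) : ℝ)
          * (if g₀ o₁.1 = g₀ o₂.1 then (1 : ℝ) else 0)
          / (g o₁.1 * qtW o₁.1) * (1 - ((o₂.2.1 : ℕ) : ℝ) / g o₁.1)
          * (((o₁.2.2 : ℕ) : ℝ) - Qbar o₁.1)) :
    (∑ w, qW w * Qbar w) - (∑ w, q₀ w * Qbar0 w) =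
      -(∑ o : W × Fin 2 × Fin 2, p o * D1 o)
      - (1 / 2) * (∑ o₁ : W × Fin 2 × Fin 2, ∑ o₂ : W × Fin 2 × Fin 2,
          p o₁ * p o₂ * D2 o₁ o₂)
      + ∑ w, q₀ w * (1 - g₀ w * qt₀ w / (g w * qtW w)) * (1 - g₀ w / g w)
          * (Qbar w - Qbar0 w) :=
  second_order_expansion_propensity_matched_general q₀ qW g₀ g Qbar0 Qbar hq₀sum qt₀ qtW hqt₀ p hp
    D1 hD1 D2 hD2
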